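/- Let G = (V, E) be a cubic graph and let (X, Y) be the corresponding instance of MLA. Then the minimum cost of a feasible labeling of (X, Y) is at most 41·τ(G), where τ(G) denotes the minimum size of a vertex cover of G. -/

import Mathlib

namespace MLA

/-! ### Generic labelings of aligned genomes -/

/-- An operation labeling a substring of the genome `X`: the substring of length
`len` starting at position `start`; `src = none` means a loss, `src = some s`
means a duplication coming from the identical occurrence starting at `s`. -/
structure Op where
  start : ℕ
  len : ℕ
  src : Option ℕ
deriving DecidableEq

/-- Cost of an operation: a duplication costs `1`, a loss of length `z` costs `z`. -/
def Op.cost (o : Op) : ℕ := if o.src = none then o.len else 1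

/-- The positions covered by (the target substring of) an operation. -/
def Op.covers (o : Op) (p : ℕ) : Prop := o.start ≤ p ∧ p < o.start + o.len

instance (o : Op) (p : ℕ) : Decidable (o.covers p) := by
  unfold Op.covers; infer_instance

/-- Validity of an operation with respect to the genome `X`: nonempty target
inside `X`, and a duplication comes from a different occurrence in `X` of a
string identical to its target substring. -/
def Op.valid {α : Type*} (X : List α) (o : Op) : Prop :=
  1 ≤ o.len ∧ o.start + o.len ≤ X.length ∧
    ∀ s, o.src = some s → s ≠ o.start ∧ s + o.len ≤ X.length ∧
      ∀ t < o.len, X[s + t]? = X[o.start + t]?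

/-- A duplication from occurrence `s` to occurrence `t` is maximal if the
characters immediately to the left of `s` and `t` differ (or one does not
exist) and likewise on the right. -/
def Op.maximalDup {α : Type*} (X : List α) (o : Op) : Prop :=
  ∃ s, o.src = some s ∧
    (s = 0 ∨ o.start = 0 ∨ X[s - 1]? ≠ X[o.start - 1]?) ∧
    (X[s + o.len]? = none ∨ X[o.start + o.len]? = none ∨
      X[s + o.len]? ≠ X[o.start + o.len]?)

/-- `L` is a labeling of the set `U` of unmatched positions of the genome `X`:
the target substrings of its operations are valid and partition `U`. -/
structure IsLabeling {α : Type*} (X : List α) (U : ℕ → Prop) (L : Finset Op) :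
    Prop where
  valid : ∀ o ∈ L, o.valid X
  unmatched : ∀ o ∈ L, ∀ p, o.covers p → U p
  covers : ∀ p, U p → ∃ o ∈ L, o.covers p
  disjoint : ∀ o ∈ L, ∀ o' ∈ L, ∀ p, o.covers p → o'.covers p → o = o'

/-- Arc of the duplication graph of a labeling: from the operation owning part
of the source occurrence of a duplication to the duplication itself. -/
def dupArc (L : Finset Op) (o o' : Op) : Prop :=
  o ∈ L ∧ o' ∈ L ∧ ∃ s, o'.src = some s ∧ ∃ p, o.covers p ∧ s ≤ p ∧ p < s + o'.len

/-- A labeling is feasible if its duplication graph has no cycle. -/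
def Feasible (L : Finset Op) : Prop := ∀ o, ¬ Relation.TransGen (dupArc L) o o

/-- Cost of a labeling. -/
def cost (L : Finset Op) : ℕ := ∑ o ∈ L, o.cost

/-- The operations of `L` labeling some position in `[lo, hi)`. -/
def restrict (L : Finset Op) (lo hi : ℕ) : Finset Op :=
  L.filter fun o => ∃ p ∈ Finset.Ico lo hi, o.covers p

/-- The total cost of the operations of `L` labeling positions in `[lo, hi)`. -/
def blockCost (L : Finset Op) (lo hi : ℕ) : ℕ := cost (restrict L lo hi)

/-! ### The reduction from Minimum Vertex Cover on cubic graphs -/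

/-- The alphabet of the reduction (all symbols are pairwise distinct). -/
inductive Sym (n : ℕ) : Type
  | s  (i : Fin n)
  | se (i j : Fin n)
  | x  (i : Fin n) (p : ℕ)
  | e  (i j : Fin n) (t : Fin 2)
  | z  (i : Fin n) (t : Fin 8)
  | w  (i : Fin n) (t : Fin 4)
  | u  (i : Fin n) (t : Fin 6)
deriving DecidableEq

variable {n : ℕ} (G : SimpleGraph (Fin n)) [DecidableRel G.Adj]

/-- The edges of `G` as pairs `(i, j)` with `i < j`, in lexicographic order. -/
def edgePairs : List (Fin n × Fin n) :=
  (List.finRange n).flatMap fun i =>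
    ((List.finRange n).filter fun j => decide (i < j ∧ G.Adj i j)).map fun j => (i, j)

/-- The edges incident to `i`, in edge order. -/
def incEdges (i : Fin n) : List (Fin n × Fin n) :=
  (edgePairs G).filter fun e => decide (e.1 = i ∨ e.2 = i)

/-- The `t`-th (`0`-based) edge incident to `i`. -/
def nthInc (i : Fin n) (t : ℕ) : Fin n × Fin n := (incEdges G i).getD t (i, i)

/-- The `0`-based index of edge `e` among the edges incident to `i`. -/
def edgeIdx (i : Fin n) (e : Fin n × Fin n) : ℕ := (incEdges G i).idxOf e

/-- Left part of the `i`-encoding of edge `e`. -/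
def encL (i : Fin n) (e : Fin n × Fin n) : List (Sym n) :=
  if i = e.1 then [.x i (edgeIdx G i e)] else [.e e.1 e.2 0, .e e.1 e.2 1]

/-- Right part of the `i`-encoding of edge `e`. -/
def encR (i : Fin n) (e : Fin n × Fin n) : List (Sym n) :=
  if i = e.1 then [.e e.1 e.2 0, .e e.1 e.2 1] else [.x i (edgeIdx G i e)]

/-- The `i`-encoding of edge `e`. -/
def enc (i : Fin n) (e : Fin n × Fin n) : List (Sym n) := encL G i e ++ encR G i e

/-- Block `B_{X-VE}(e)`. -/
def edgeBlockX (e : Fin n × Fin n) : List (Sym n) :=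
  [.se e.1 e.2, .x e.1 (edgeIdx G e.1 e), .e e.1 e.2 0, .e e.1 e.2 1,
   .x e.2 (edgeIdx G e.2 e)]

/-- Block `B_{X-VE}(v_i)`. -/
def vertexBlockX (i : Fin n) : List (Sym n) :=
  [.s i, .z i 0, .z i 1] ++ enc G i (nthInc G i 0) ++
  [.z i 2, .z i 3] ++ enc G i (nthInc G i 1) ++
  [.z i 4, .z i 5] ++ enc G i (nthInc G i 2) ++
  [.z i 6, .z i 7]

/-- Block `B_{X,A,1}(v_i) = B_{Y,A,1}(v_i)`. -/
def A1Block (i : Fin n) : List (Sym n) :=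
  [.w i 0, .z i 0, .z i 1, .w i 1, .z i 2, .z i 3,
   .w i 2, .z i 4, .z i 5, .w i 3, .z i 6, .z i 7]

/-- Block `B_{X,A,2}(v_i) = B_{Y,A,2}(v_i)`. -/
def A2Block (i : Fin n) : List (Sym n) :=
  [.u i 0, .z i 1] ++ encL G i (nthInc G i 0) ++ [.u i 1] ++ encR G i (nthInc G i 0) ++
  [.z i 2, .u i 2, .z i 3] ++ encL G i (nthInc G i 1) ++ [.u i 3] ++ encR G i (nthInc G i 1) ++
  [.z i 4, .u i 4, .z i 5] ++ encL G i (nthInc G i 2) ++ [.u i 5] ++ encR G i (nthInc G i 2) ++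
  [.z i 6]

/-- The genome `X` corresponding to the cubic graph `G`. -/
def genomeX : List (Sym n) :=
  ((List.finRange n).flatMap fun i => vertexBlockX G i) ++
  ((edgePairs G).flatMap fun e => edgeBlockX G e) ++
  ((List.finRange n).flatMap fun i => A1Block i ++ A2Block G i)

/-- The aligned genome `Y` (`none` denotes a gap). -/
def alignedY : List (Option (Sym n)) :=
  ((List.finRange n).flatMap fun i => some (.s i) :: List.replicate 17 none) ++
  ((edgePairs G).flatMap fun e => some (.se e.1 e.2) :: List.replicate 4 none) ++
  ((List.finRange n).flatMap fun i => (A1Block i ++ A2Block G i).map some)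

/-- The unmatched positions of `X` (those aligned with a gap of `Y`). -/
def UnmatchedX (p : ℕ) : Prop := (alignedY G)[p]? = some none

/-- Start position of `B_{X-VE}(v_i)` in `X`. -/
def vStart (i : Fin n) : ℕ := 18 * i.val

/-- Start position of `B_{X-VE}(e)` in `X`. -/
def eStart (e : Fin n × Fin n) : ℕ := 18 * n + 5 * (edgePairs G).idxOf e

/-- Start position of `B_{X,A,1}(v_i)` in `X` (`B_{X,A,2}(v_i)` starts 12 later). -/
def aStart (i : Fin n) : ℕ := 18 * n + 5 * (edgePairs G).length + 33 * i.val

/-- Offset of the `i`-encoding inside `B_{X-VE}(e)`. -/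
def encOff (i : Fin n) (e : Fin n × Fin n) : ℕ := if i = e.1 then 1 else 2

/-- The type-a labeling of `B_{X-VE}(v_i)`: four duplications coming from
`B_{X,A,1}(v_i)` (for the pairs of `z`-symbols) and three duplications coming
from the blocks of the three edges incident to `v_i` (for the encodings). -/
def typeA (i : Fin n) : Finset Op :=
  { ⟨vStart i + 1, 2, some (aStart G i + 1)⟩,
    ⟨vStart i + 6, 2, some (aStart G i + 4)⟩,
    ⟨vStart i + 11, 2, some (aStart G i + 7)⟩,
    ⟨vStart i + 16, 2, some (aStart G i + 10)⟩,
    ⟨vStart i + 3, 3, some (eStart G (nthInc G i 0) + encOff i (nthInc G i 0))⟩,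
    ⟨vStart i + 8, 3, some (eStart G (nthInc G i 1) + encOff i (nthInc G i 1))⟩,
    ⟨vStart i + 13, 3, some (eStart G (nthInc G i 2) + encOff i (nthInc G i 2))⟩ }

/-- The type-b labeling of `B_{X-VE}(v_i)`: six duplications coming from
`B_{X,A,2}(v_i)` and two losses of length one (for `z_{i,1}` and `z_{i,8}`). -/
def typeB (i : Fin n) : Finset Op :=
  let a := aStart G i + 12
  let l1 := (encL G i (nthInc G i 0)).length
  let l2 := (encL G i (nthInc G i 1)).length
  let l3 := (encL G i (nthInc G i 2)).length
  { ⟨vStart i + 1, 1, none⟩,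
    ⟨vStart i + 17, 1, none⟩,
    ⟨vStart i + 2, 1 + l1, some (a + 1)⟩,
    ⟨vStart i + 3 + l1, 4 - l1, some (a + 3 + l1)⟩,
    ⟨vStart i + 7, 1 + l2, some (a + 8)⟩,
    ⟨vStart i + 8 + l2, 4 - l2, some (a + 10 + l2)⟩,
    ⟨vStart i + 12, 1 + l3, some (a + 15)⟩,
    ⟨vStart i + 13 + l3, 4 - l3, some (a + 17 + l3)⟩ }

/-- The cost-2 labeling of `B_{X-VE}(e)` using a duplication coming from
`B_{X-VE}(v_i)` (where `i = e.1`) and a loss for the last character. -/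
def edgeLabA (e : Fin n × Fin n) : Finset Op :=
  { ⟨eStart G e + 1, 3, some (vStart e.1 + 3 + 5 * edgeIdx G e.1 e)⟩,
    ⟨eStart G e + 4, 1, none⟩ }

/-- The cost-2 labeling of `B_{X-VE}(e)` using a duplication coming from
`B_{X-VE}(v_j)` (where `j = e.2`) and a loss for the second character. -/
def edgeLabB (e : Fin n × Fin n) : Finset Op :=
  { ⟨eStart G e + 2, 3, some (vStart e.2 + 3 + 5 * edgeIdx G e.2 e)⟩,
    ⟨eStart G e + 1, 1, none⟩ }

/-- `C` is a vertex cover of `G`. -/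
def IsVC (C : Finset (Fin n)) : Prop := ∀ ⦃u v : Fin n⦄, G.Adj u v → u ∈ C ∨ v ∈ C

end MLA

/-!
Duplicate the four pairs `z_{i,2k+1} z_{i,2k+2}` of every vertex block from their copy in
`B_{X,A,1}(v_i)` and label every other unmatched character by a loss. All duplications copy
matched characters, so the duplication graph has no arcs at all and the labeling is feasible; its
cost is `(4 + 3·3)·n + 4·|E| = 13n + 4|E|`. In a cubic graph `3n = 2|E|`, and a vertex cover `C`
meets every edge while each vertex has only three incident edges, so `|E| ≤ 3|C|`. Hence the
cost is at most `38·τ(G) ≤ 41·τ(G)`.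
-/

namespace List

variable {α β : Type*}

theorem length_flatMap_of_forall_length_eq {f : α → List β} {c : ℕ} {l : List α}
    (h : ∀ a ∈ l, (f a).length = c) : (l.flatMap f).length = c * l.length := by
  rw [length_flatMap, map_congr_left h, map_const', sum_replicate, smul_eq_mul, mul_comm]

theorem getElem?_flatMap_mul_add {f : α → List β} {c : ℕ} {l : List α}
    (h : ∀ a ∈ l, (f a).length = c) {k t : ℕ} (hk : k < l.length) (ht : t < c) :
    (l.flatMap f)[c * k + t]? = (f l[k])[t]? := by
  induction l generalizing k with
  | nil => simp at hk
  | cons a l ih =>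
    have ha : (f a).length = c := h a mem_cons_self
    cases k with
    | zero => simp [getElem?_append_left (ha ▸ ht : t < (f a).length)]
    | succ k =>
      rw [flatMap_cons, getElem?_append_right (by rw [ha]; nlinarith), ha,
        show c * (k + 1) + t - c = c * k + t by rw [Nat.mul_succ]; omega]
      exact ih (fun b hb => h b (mem_cons_of_mem a hb)) (by simpa using hk)

theorem getElem?_flatMap_of_lt_mul {f : α → List β} {c : ℕ} {l : List α}
    (h : ∀ a ∈ l, (f a).length = c) {p : ℕ} (hp : p < c * l.length) :
    (l.flatMap f)[p]? = (f (l[p / c]'(Nat.div_lt_of_lt_mul hp)))[p % c]? := by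
  conv_lhs => rw [← Nat.div_add_mod p c]
  exact getElem?_flatMap_mul_add h _ (Nat.mod_lt _ (Nat.pos_of_ne_zero (by rintro rfl; simp at hp)))

theorem getElem?_cons_replicate_none_eq_some_none {a : α} {c r : ℕ} :
    (some a :: replicate c none)[r]? = some none ↔ 0 < r ∧ r ≤ c := by
  cases r <;> simp [getElem?_replicate]

end List

namespace SimpleGraph

open Finset

variable {V : Type*} [Fintype V] (G : SimpleGraph V) [DecidableRel G.Adj]

theorem card_edgeFinset_le_mul_card_of_isVertexCover [DecidableEq V] {d : ℕ}
    (hdeg : ∀ v, G.degree v ≤ d) {c : Finset V} (hc : G.IsVertexCover c) :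
    #G.edgeFinset ≤ d * #c := by
  have hsub : G.edgeFinset ⊆ c.biUnion fun v => G.incidenceFinset v := by
    intro e he
    induction e with
    | _ a b =>
      rw [mem_edgeFinset, mem_edgeSet] at he
      rcases hc he with h | h
      · exact mem_biUnion.2
          ⟨a, h, (G.mem_incidenceFinset _ _).2 ⟨he, Sym2.mem_mk_left a b⟩⟩
      · exact mem_biUnion.2
          ⟨b, h, (G.mem_incidenceFinset _ _).2 ⟨he, Sym2.mem_mk_right a b⟩⟩
  calc #G.edgeFinset ≤ #(c.biUnion fun v => G.incidenceFinset v) := card_le_card hsub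
    _ ≤ #c * d := card_biUnion_le_card_mul _ _ _ fun v _ => by
        rw [card_incidenceFinset_eq_degree]; exact hdeg v
    _ = d * #c := mul_comm _ _

theorem two_mul_card_edgeFinset_of_degree_eq {d : ℕ} (hdeg : ∀ v, G.degree v = d) :
    2 * #G.edgeFinset = d * Fintype.card V := by
  rw [← sum_degrees_eq_twice_card_edges, Finset.sum_congr rfl fun v _ => hdeg v, sum_const,
    card_univ, smul_eq_mul, mul_comm]

end SimpleGraph

namespace MLA

open Finset

theorem IsLabeling.feasible {α : Type*} {X : List α} {U : ℕ → Prop} {L : Finset Op}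
    (hL : IsLabeling X U L)
    (hsrc : ∀ o ∈ L, ∀ s, o.src = some s → ∀ p, s ≤ p → p < s + o.len → ¬ U p) :
    Feasible L := by
  have no_arc : ∀ a b, ¬ dupArc L a b := by
    rintro a b ⟨ha, hb, s, hs, p, hap, hsp, hps⟩
    exact hsrc b hb s hs p hsp hps (hL.unmatched a ha p hap)
  intro o ho
  cases ho with
  | single h => exact no_arc _ _ h
  | tail _ h => exact no_arc _ _ h

theorem cost_union_le (L L' : Finset Op) : cost (L ∪ L') ≤ cost L + cost L' := by
  rw [cost, cost, cost, ← sum_union_inter]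
  exact Nat.le_add_right _ _

theorem cost_image_le {ι : Type*} (s : Finset ι) (f : ι → Op) :
    cost (s.image f) ≤ ∑ x ∈ s, (f x).cost :=
  sum_image_le_of_nonneg fun _ _ => Nat.zero_le _

def edgeLoss (n j : ℕ) : Op := ⟨18 * n + 5 * j + 1, 4, none⟩

def encLoss {n : ℕ} (i : Fin n) (k : ℕ) : Op := ⟨vStart i + 3 + 5 * k, 3, none⟩

variable {n : ℕ} (G : SimpleGraph (Fin n)) [DecidableRel G.Adj]

theorem mem_edgePairs {e : Fin n × Fin n} : e ∈ edgePairs G ↔ e.1 < e.2 ∧ G.Adj e.1 e.2 := by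
  obtain ⟨a, b⟩ := e
  simp [edgePairs]

theorem nodup_edgePairs : (edgePairs G).Nodup := by
  rw [edgePairs, List.nodup_flatMap]
  refine ⟨fun i _ => ((List.nodup_finRange n).filter _).map fun _ _ => congrArg Prod.snd, ?_⟩
  refine (List.pairwise_lt_finRange n).imp fun hij => ?_
  simp only [List.disjoint_left, List.mem_map]
  rintro _ ⟨_, _, rfl⟩ ⟨_, _, h⟩
  exact hij.ne (congrArg Prod.fst h).symm

theorem length_edgePairs_le_card_edgeFinset : (edgePairs G).length ≤ #G.edgeFinset := by
  rw [← List.toFinset_card_of_nodup (nodup_edgePairs G)]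
  refine card_le_card_of_injOn (fun e => s(e.1, e.2)) (fun e he => ?_) fun e he e' he' h => ?_
  · simpa using ((mem_edgePairs G).1 (List.mem_toFinset.1 he)).2
  · have := ((mem_edgePairs G).1 (List.mem_toFinset.1 he)).1
    have := ((mem_edgePairs G).1 (List.mem_toFinset.1 he')).1
    rcases Sym2.eq_iff.1 h with ⟨h1, h2⟩ | ⟨h1, h2⟩
    · exact Prod.ext h1 h2
    · omega

theorem length_enc (i : Fin n) (e : Fin n × Fin n) : (enc G i e).length = 3 := by
  unfold enc encL encR; split_ifs <;> rfl

theorem length_vertexBlockX (i : Fin n) : (vertexBlockX G i).length = 18 := by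
  simp [vertexBlockX, length_enc]

theorem length_edgeBlockX (e : Fin n × Fin n) : (edgeBlockX G e).length = 5 := rfl

theorem length_ABlock (i : Fin n) : (A1Block i ++ A2Block G i).length = 33 := by
  simp only [A1Block, A2Block, encL, encR]; split_ifs <;> rfl

theorem length_genomeX :
    (genomeX G).length = 18 * n + 5 * (edgePairs G).length + 33 * n := by
  rw [genomeX, List.length_append, List.length_append,
    List.length_flatMap_of_forall_length_eq (fun i _ => length_vertexBlockX G i),
    List.length_flatMap_of_forall_length_eq (fun e _ => length_edgeBlockX G e),
    List.length_flatMap_of_forall_length_eq (fun i _ => length_ABlock G i), List.length_finRange]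

theorem getElem?_genomeX_vStart (i : Fin n) {t : ℕ} (ht : t < 18) :
    (genomeX G)[vStart i + t]? = (vertexBlockX G i)[t]? := by
  have hV := List.length_flatMap_of_forall_length_eq (l := List.finRange n)
    (fun i _ => length_vertexBlockX G i)
  rw [genomeX, List.append_assoc, List.getElem?_append_left (by simp [hV, vStart]; omega),
    vStart, List.getElem?_flatMap_mul_add (fun i _ => length_vertexBlockX G i) (by simp) ht]
  simp

theorem getElem?_genomeX_aStart (i : Fin n) {t : ℕ} (ht : t < 33) :
    (genomeX G)[aStart G i + t]? = (A1Block i ++ A2Block G i)[t]? := by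
  have hV := List.length_flatMap_of_forall_length_eq (l := List.finRange n)
    (fun i _ => length_vertexBlockX G i)
  have hE := List.length_flatMap_of_forall_length_eq (l := edgePairs G)
    (fun e _ => length_edgeBlockX G e)
  rw [genomeX, List.getElem?_append_right (by simp [hV, hE, aStart]; omega)]
  rw [show aStart G i + t - _ = 33 * i.val + t by simp [hV, hE, aStart]; omega,
    List.getElem?_flatMap_mul_add (fun i _ => length_ABlock G i) (by simp) ht]
  simp

theorem getElem?_vertexBlockX_z (i : Fin n) {k t : ℕ} (hk : k < 4) (ht : t < 2) :
    (vertexBlockX G i)[1 + 5 * k + t]? = (A1Block i)[1 + 3 * k + t]? := by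
  interval_cases k <;> interval_cases t <;> simp [vertexBlockX, A1Block, length_enc]

theorem unmatchedX_iff {p : ℕ} : UnmatchedX G p ↔
    (p < 18 * n ∧ p % 18 ≠ 0) ∨
      (18 * n ≤ p ∧ p < 18 * n + 5 * (edgePairs G).length ∧ (p - 18 * n) % 5 ≠ 0) := by
  have hV : ∀ i ∈ List.finRange n, (some (Sym.s i) :: List.replicate 17 none).length = 18 :=
    fun _ _ => rfl
  have hE : ∀ e ∈ edgePairs G, (some (Sym.se e.1 e.2) :: List.replicate 4 none).length = 5 :=
    fun _ _ => rfl
  have hVl := List.length_flatMap_of_forall_length_eq hV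
  have hEl := List.length_flatMap_of_forall_length_eq hE
  rw [List.length_finRange] at hVl
  rw [UnmatchedX, alignedY]
  rcases lt_or_ge p (18 * n) with h1 | h1
  · rw [List.getElem?_append_left (by rw [List.length_append, hVl, hEl]; omega),
      List.getElem?_append_left (by omega), List.getElem?_flatMap_of_lt_mul hV (by simpa using h1),
      List.getElem?_cons_replicate_none_eq_some_none]
    omega
  rcases lt_or_ge p (18 * n + 5 * (edgePairs G).length) with h2 | h2
  · rw [List.getElem?_append_left (by rw [List.length_append, hVl, hEl]; omega),
      List.getElem?_append_right (by omega), hVl, List.getElem?_flatMap_of_lt_mul hE (by omega),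
      List.getElem?_cons_replicate_none_eq_some_none]
    omega
  · rw [List.getElem?_append_right (by rw [List.length_append, hVl, hEl]; omega)]
    refine iff_of_false (fun h => ?_) (by omega)
    obtain ⟨i, -, hi⟩ := List.mem_flatMap.1 (List.mem_of_getElem? h)
    simp at hi

def zPairDup (i : Fin n) (k : ℕ) : Op :=
  ⟨vStart i + 1 + 5 * k, 2, some (aStart G i + 1 + 3 * k)⟩

def pairLabeling : Finset Op :=
  ((univ ×ˢ range 4).image fun ik => zPairDup G ik.1 ik.2) ∪
    ((univ ×ˢ range 3).image fun ik : Fin n × ℕ => encLoss ik.1 ik.2) ∪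
    (range (edgePairs G).length).image (edgeLoss n)

theorem mem_pairLabeling {o : Op} : o ∈ pairLabeling G ↔
    (∃ i, ∃ k < 4, zPairDup G i k = o) ∨ (∃ i : Fin n, ∃ k < 3, encLoss i k = o) ∨
      ∃ j < (edgePairs G).length, edgeLoss n j = o := by
  simp [pairLabeling]

theorem valid_zPairDup (i : Fin n) {k : ℕ} (hk : k < 4) :
    (zPairDup G i k).valid (genomeX G) := by
  have := i.isLt
  refine ⟨by simp [zPairDup], ?_, fun s hs => ?_⟩
  · simp only [zPairDup, vStart, length_genomeX]; omega
  obtain rfl : aStart G i + 1 + 3 * k = s := Option.some_inj.1 hs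
  refine ⟨by simp only [zPairDup, vStart, aStart]; omega,
    by simp only [zPairDup, aStart, length_genomeX]; omega, fun t ht => ?_⟩
  simp only [zPairDup] at ht ⊢
  rw [show aStart G i + 1 + 3 * k + t = aStart G i + (1 + 3 * k + t) by omega,
    show vStart i + 1 + 5 * k + t = vStart i + (1 + 5 * k + t) by omega,
    getElem?_genomeX_aStart G i (by omega), getElem?_genomeX_vStart G i (by omega),
    List.getElem?_append_left (by simp only [A1Block, List.length_cons, List.length_nil]; omega),
    getElem?_vertexBlockX_z G i hk ht]

theorem valid_of_mem_pairLabeling {o : Op} (ho : o ∈ pairLabeling G) :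
    o.valid (genomeX G) := by
  rcases (mem_pairLabeling G).1 ho with ⟨i, k, hk, rfl⟩ | ⟨i, k, hk, rfl⟩ | ⟨j, hj, rfl⟩
  · exact valid_zPairDup G i hk
  · refine ⟨by simp [encLoss], ?_, fun s hs => by simp [encLoss] at hs⟩
    have := i.isLt
    simp only [encLoss, vStart, length_genomeX]; omega
  · refine ⟨by simp [edgeLoss], ?_, fun s hs => by simp [edgeLoss] at hs⟩
    simp only [edgeLoss, length_genomeX]; omega

theorem unmatchedX_of_mem_pairLabeling {o : Op} (ho : o ∈ pairLabeling G) {p : ℕ}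
    (hp : o.covers p) : UnmatchedX G p := by
  rw [unmatchedX_iff]
  rcases (mem_pairLabeling G).1 ho with
    ⟨i, k, hk, rfl⟩ | ⟨i, k, hk, rfl⟩ | ⟨j, hj, rfl⟩ <;>
    simp only [Op.covers, zPairDup, encLoss, edgeLoss, vStart] at hp
  · interval_cases k <;> omega
  · interval_cases k <;> omega
  · omega

theorem exists_mem_pairLabeling_covers {p : ℕ} (hp : UnmatchedX G p) :
    ∃ o ∈ pairLabeling G, o.covers p := by
  rw [unmatchedX_iff] at hp
  rcases hp with ⟨hp, hr⟩ | ⟨hp, hp', hr⟩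
  · obtain ⟨i, hi⟩ : ∃ i : Fin n, i.val = p / 18 := ⟨⟨p / 18, by omega⟩, rfl⟩
    by_cases hz : (p % 18 - 1) % 5 < 2
    · exact ⟨zPairDup G i ((p % 18 - 1) / 5),
        (mem_pairLabeling G).2 (Or.inl ⟨i, _, by omega, rfl⟩),
        by simp only [Op.covers, zPairDup, vStart]; omega⟩
    · exact ⟨encLoss i ((p % 18 - 1) / 5),
        (mem_pairLabeling G).2 (Or.inr (Or.inl ⟨i, _, by omega, rfl⟩)),
        by simp only [Op.covers, encLoss, vStart]; omega⟩
  · exact ⟨edgeLoss n ((p - 18 * n) / 5),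
      (mem_pairLabeling G).2 (Or.inr (Or.inr ⟨_, by omega, rfl⟩)),
      by simp only [Op.covers, edgeLoss]; omega⟩

theorem eq_of_mem_pairLabeling_of_covers {o o' : Op} (ho : o ∈ pairLabeling G)
    (ho' : o' ∈ pairLabeling G) {p : ℕ} (hp : o.covers p) (hp' : o'.covers p) : o = o' := by
  rcases (mem_pairLabeling G).1 ho with
    ⟨i, k, hk, rfl⟩ | ⟨i, k, hk, rfl⟩ | ⟨j, hj, rfl⟩ <;>
  rcases (mem_pairLabeling G).1 ho' with
    ⟨i', k', hk', rfl⟩ | ⟨i', k', hk', rfl⟩ | ⟨j', hj', rfl⟩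
  all_goals
    simp only [Op.covers, zPairDup, encLoss, edgeLoss, vStart, aStart, Op.mk.injEq,
      Option.some_inj, reduceCtorEq, and_true, true_and, and_false] at hp hp' ⊢
    first | omega | (obtain rfl : i = i' := Fin.ext (by omega); omega)

theorem isLabeling_pairLabeling : IsLabeling (genomeX G) (UnmatchedX G) (pairLabeling G) :=
  ⟨fun _ => valid_of_mem_pairLabeling G, fun _ ho _ => unmatchedX_of_mem_pairLabeling G ho,
    fun _ => exists_mem_pairLabeling_covers G,
    fun _ ho _ ho' _ => eq_of_mem_pairLabeling_of_covers G ho ho'⟩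

theorem feasible_pairLabeling : Feasible (pairLabeling G) := by
  refine (isLabeling_pairLabeling G).feasible fun o ho s hs p hsp _ => ?_
  rw [unmatchedX_iff]
  rcases (mem_pairLabeling G).1 ho with
    ⟨i, k, -, rfl⟩ | ⟨_, _, -, rfl⟩ | ⟨_, -, rfl⟩ <;>
    simp only [zPairDup, encLoss, edgeLoss, Option.some_inj, reduceCtorEq] at hs
  subst hs
  simp only [aStart] at hsp
  omega

theorem cost_pairLabeling_le : cost (pairLabeling G) ≤ 13 * n + 4 * (edgePairs G).length := by
  calc cost (pairLabeling G)
      ≤ ∑ ik ∈ (univ : Finset (Fin n)) ×ˢ range 4, (zPairDup G ik.1 ik.2).cost +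
          ∑ ik ∈ (univ : Finset (Fin n)) ×ˢ range 3, (encLoss ik.1 ik.2).cost +
          ∑ j ∈ range (edgePairs G).length, (edgeLoss n j).cost := by
        grw [pairLabeling, cost_union_le, cost_union_le, cost_image_le, cost_image_le,
          cost_image_le]
    _ = 13 * n + 4 * (edgePairs G).length := by
        simp [Op.cost, zPairDup, encLoss, edgeLoss]; ring

end MLA

open MLA in
/-- The minimum cost of a feasible labeling of the MLA instance
`(X, Y)` corresponding to a cubic graph `G` is at most `41·τ(G)`, where `τ(G)`
is the minimum size of a vertex cover of `G`. -/
theorem min_cost_le_41_tau {n : ℕ} (G : SimpleGraph (Fin n))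
    [DecidableRel G.Adj] (hcubic : ∀ v : Fin n, G.degree v = 3) :
    sInf {c : ℕ | ∃ L : Finset Op,
        IsLabeling (genomeX G) (UnmatchedX G) L ∧ Feasible L ∧ cost L = c} ≤
      41 * sInf {k : ℕ | ∃ C : Finset (Fin n), IsVC G C ∧ C.card = k} := by
  have hne : {k : ℕ | ∃ C : Finset (Fin n), IsVC G C ∧ C.card = k}.Nonempty :=
    ⟨_, Finset.univ, fun u _ _ => Or.inl (Finset.mem_univ u), rfl⟩
  obtain ⟨C, hC, hτ⟩ := Nat.sInf_mem hne
  have hE := G.card_edgeFinset_le_mul_card_of_isVertexCover (fun v => (hcubic v).le) hC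
  have hV := G.two_mul_card_edgeFinset_of_degree_eq hcubic
  have hm := length_edgePairs_le_card_edgeFinset G
  rw [Fintype.card_fin] at hV
  calc _ ≤ cost (pairLabeling G) :=
        Nat.sInf_le (by exact ⟨_, isLabeling_pairLabeling G, feasible_pairLabeling G, rfl⟩)
    _ ≤ 13 * n + 4 * (edgePairs G).length := cost_pairLabeling_le G
    _ ≤ 41 * C.card := by omega
    _ = _ := by rw [hτ]
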